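/- Equality of the multisum and single-sum representations: for r ∈ ℕ, h ∈ ℤ, x real, n ≥ 0, and 0 < q < 1, the r-fold sum 2^r ∑_{m_1,…,m_r=0}^∞ q^{∑_{l=1}^r (h-l) m_l} (-1)^{m_1+⋯+m_r} [x + m_1+⋯+m_r]_q^n equals the single sum 2^r ∑_{m=0}^∞ (m+r-1 choose m)_q q^{(h-r)m} (-1)^m [m+x]_q^n, both series converging absolutely. -/

import Mathlib

/-- The `q`-number `[z]_q = (1 - q^z)/(1 - q)` for real `z` (with `q^z = exp(z log q)`). -/
noncomputable def qNum (q z : ℝ) : ℝ := (1 - q ^ z) / (1 - q)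

/-- The Gaussian binomial coefficient `(n choose k)_q`, defined by the
`q`-Pascal recursion. -/
def gaussBinom {R : Type*} [CommRing R] (q : R) : ℕ → ℕ → R
  | _, 0 => 1
  | 0, _ + 1 => 0
  | n + 1, k + 1 => gaussBinom q n (k + 1) * q ^ (k + 1) + gaussBinom q n k

/-!
Split the exponent as `(h - (l + 1)) m_l = (h - r) m_l + (r - 1 - l) m_l`. A term of the multisum
then depends on `m` only through `M = m_1 + ⋯ + m_r` apart from the factor `q^{∑ (r - 1 - l) m_l}`,
and summing this factor over the compositions of `M` into `r` parts gives the Gaussian binomial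
`(M + r - 1 choose M)_q`. Since `h > r`, the terms are dominated by `C ∏ q^{m_l}`, so the multisum
converges absolutely and may be summed along the fibres `m_1 + ⋯ + m_r = M`; this yields the single
sum together with its convergence.
-/

open Finset Real

theorem Finset.Nat.sum_antidiagonalTuple_succ {M : Type*} [AddCommMonoid M] (k n : ℕ)
    (f : (Fin (k + 1) → ℕ) → M) :
    ∑ x ∈ antidiagonalTuple (k + 1) n, f x =
      ∑ p ∈ antidiagonal n, ∑ x ∈ antidiagonalTuple k p.2, f (Fin.cons p.1 x) := by
  rw [sum_eq_multiset_sum, sum_eq_multiset_sum]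
  show (Multiset.map f (Multiset.ofList (List.Nat.antidiagonalTuple (k + 1) n))).sum =
    (Multiset.map _ (Multiset.ofList (List.Nat.antidiagonal n))).sum
  simp only [List.Nat.antidiagonalTuple, Multiset.map_coe, Multiset.sum_coe, List.flatMap_def,
    List.map_flatten, List.sum_flatten, List.map_map]
  congr 1
  refine List.map_congr_left fun p _ => ?_
  rw [sum_eq_multiset_sum]
  show _ = (Multiset.map _ (Multiset.ofList (List.Nat.antidiagonalTuple k p.2))).sum
  simp only [Multiset.map_coe, Multiset.sum_coe, Function.comp_apply, List.map_map]
  rfl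

section GaussBinom

variable {R : Type*} [CommRing R] (q : R)

theorem gaussBinom_zero_right (n : ℕ) : gaussBinom q n 0 = 1 := by
  cases n <;> rfl

theorem gaussBinom_eq_zero_of_lt : ∀ {n k : ℕ}, n < k → gaussBinom q n k = 0
  | 0, _ + 1, _ => rfl
  | n + 1, k + 1, h => by
    rw [gaussBinom, gaussBinom_eq_zero_of_lt (by omega), gaussBinom_eq_zero_of_lt (by omega)]
    ring

theorem sum_range_pow_mul_gaussBinom (k M : ℕ) :
    ∑ j ∈ range (M + 1), q ^ j * gaussBinom q (j + k - 1) j = gaussBinom q (M + k) M := by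
  induction M with
  | zero => simp [gaussBinom_zero_right]
  | succ M ih =>
    rw [sum_range_succ, ih, show M + 1 + k - 1 = M + k by omega,
      show M + 1 + k = M + k + 1 by omega, gaussBinom]
    ring

theorem sum_antidiagonalTuple_pow_weight (r M : ℕ) :
    ∑ m ∈ Nat.antidiagonalTuple r M, q ^ (∑ l : Fin r, (l : ℕ) * m l) =
      gaussBinom q (M + r - 1) M := by
  induction r generalizing M with
  | zero =>
    cases M with
    | zero => simp [gaussBinom_zero_right]
    | succ M => simp [gaussBinom_eq_zero_of_lt q (Nat.lt_succ_self M)]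
  | succ k ih =>
    -- The first part has weight `0`, and shifting the remaining parts raises the weight by `p.2`.
    have hcons : ∀ p ∈ antidiagonal M,
        ∑ m ∈ Nat.antidiagonalTuple k p.2,
            q ^ (∑ l : Fin (k + 1), (l : ℕ) * (Fin.cons p.1 m : Fin (k + 1) → ℕ) l) =
          q ^ p.2 * gaussBinom q (p.2 + k - 1) p.2 := by
      intro p _
      rw [← ih, mul_sum]
      refine sum_congr rfl fun m hm => ?_
      rw [Nat.mem_antidiagonalTuple] at hm
      simp only [Fin.sum_univ_succ, Fin.val_zero, Fin.cons_zero, Fin.val_succ, Fin.cons_succ,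
        zero_mul, zero_add, add_mul, one_mul, sum_add_distrib, hm, ← pow_add, add_comm]
    rw [Nat.sum_antidiagonalTuple_succ, sum_congr rfl hcons, ← Nat.sum_antidiagonal_swap]
    simp only [Prod.snd_swap]
    rw [Nat.sum_antidiagonal_eq_sum_range_succ (fun i _ => q ^ i * gaussBinom q (i + k - 1) i)]
    exact sum_range_pow_mul_gaussBinom q k M

theorem sum_antidiagonalTuple_pow_rev_weight (r M : ℕ) :
    ∑ m ∈ Nat.antidiagonalTuple r M, q ^ (∑ l : Fin r, (l.rev : ℕ) * m l) =
      gaussBinom q (M + r - 1) M := by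
  rw [← sum_antidiagonalTuple_pow_weight]
  have hsum (g : Fin r → ℕ) : ∑ l : Fin r, g l.rev = ∑ l, g l :=
    Fintype.sum_equiv Fin.revPerm _ _ fun _ => rfl
  have hrev (m : Fin r → ℕ) : m ∘ Fin.rev ∈ Nat.antidiagonalTuple r M ↔
      m ∈ Nat.antidiagonalTuple r M := by
    simp only [Nat.mem_antidiagonalTuple, Function.comp_apply, hsum]
  refine sum_nbij' (· ∘ Fin.rev) (· ∘ Fin.rev) (fun m hm => (hrev m).mpr hm)
    (fun m hm => (hrev m).mpr hm) (fun m _ => by simp [Function.comp_def])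
    (fun m _ => by simp [Function.comp_def]) (fun m _ => ?_)
  simpa using congrArg (q ^ ·) (hsum fun l => (l.rev : ℕ) * m l).symm

end GaussBinom

theorem summable_prod_pi_of_nonneg {α : Type*} {f : α → ℝ} (hf0 : 0 ≤ f) (hf : Summable f) :
    ∀ r : ℕ, Summable fun m : Fin r → α => ∏ l, f (m l)
  | 0 => .of_finite
  | r + 1 => by
    rw [← (Fin.consEquiv fun _ => α).summable_iff]
    simpa [Function.comp_def, Fin.prod_univ_succ] using
      hf.mul_of_nonneg (summable_prod_pi_of_nonneg hf0 hf r) hf0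
        fun m => prod_nonneg fun l _ => hf0 (m l)

theorem abs_qNum_add_le {q : ℝ} (hq0 : 0 < q) (hq1 : q < 1) (x : ℝ) {s : ℝ} (hs : 0 ≤ s) :
    |qNum q (x + s)| ≤ (1 + q ^ x) / (1 - q) := by
  have hpow : q ^ (x + s) ≤ q ^ x := rpow_le_rpow_of_exponent_ge hq0 hq1.le (by linarith)
  rw [qNum, abs_div, abs_of_pos (sub_pos.mpr hq1)]
  gcongr
  calc |1 - q ^ (x + s)| ≤ |1| + |q ^ (x + s)| := abs_sub _ _
    _ ≤ 1 + q ^ x := by rw [abs_one, abs_of_pos (rpow_pos_of_pos hq0 _)]; linarith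

theorem HasSum.sum_antidiagonalTuple {α : Type*} [AddCommMonoid α] [TopologicalSpace α]
    [ContinuousAdd α] [RegularSpace α] {r : ℕ} {f : (Fin r → ℕ) → α} {a : α}
    (hf : HasSum f a) : HasSum (fun M => ∑ m ∈ Nat.antidiagonalTuple r M, f m) a :=
  ((Nat.sigmaAntidiagonalTupleEquivTuple r).hasSum_iff.mpr hf).sigma fun _ => Finset.hasSum _ _

noncomputable def multisumTerm (q x : ℝ) (h : ℤ) (n r : ℕ) (m : Fin r → ℕ) : ℝ :=
  q ^ (∑ l : Fin r, ((h : ℝ) - (l.1 + 1)) * (m l : ℝ)) *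
    (-1 : ℝ) ^ (∑ l : Fin r, m l) * qNum q (x + (∑ l : Fin r, m l : ℕ)) ^ n

noncomputable def singleSumTerm (q x : ℝ) (h : ℤ) (n r m : ℕ) : ℝ :=
  gaussBinom q (m + r - 1) m * q ^ (((h : ℝ) - r) * m) * (-1 : ℝ) ^ m * qNum q (m + x) ^ n

theorem summable_multisumTerm {q : ℝ} (hq0 : 0 < q) (hq1 : q < 1) {r : ℕ} {h : ℤ}
    (hh : (r : ℤ) < h) (x : ℝ) (n : ℕ) : Summable (multisumTerm q x h n r) := by
  set C := (1 + q ^ x) / (1 - q)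
  refine Summable.of_norm_bounded ((summable_prod_pi_of_nonneg (fun _ => by positivity)
    (summable_geometric_of_lt_one hq0.le hq1) r).mul_left (C ^ n)) fun m => ?_
  have hexp : ((∑ l, m l : ℕ) : ℝ) ≤ ∑ l : Fin r, ((h : ℝ) - (l.1 + 1)) * (m l : ℝ) := by
    push_cast
    refine sum_le_sum fun l _ => le_mul_of_one_le_left (by positivity) ?_
    have hl : (l.1 : ℝ) + 1 ≤ r := by exact_mod_cast l.2
    have hrh : (r : ℝ) + 1 ≤ h := by exact_mod_cast hh
    linarith
  calc ‖multisumTerm q x h n r m‖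
      = q ^ (∑ l : Fin r, ((h : ℝ) - (l.1 + 1)) * (m l : ℝ)) *
          |qNum q (x + (∑ l : Fin r, m l : ℕ))| ^ n := by
        simp [multisumTerm, abs_of_pos (rpow_pos_of_pos hq0 _)]
    _ ≤ q ^ ((∑ l, m l : ℕ) : ℝ) * C ^ n :=
        mul_le_mul (rpow_le_rpow_of_exponent_ge hq0 hq1.le hexp)
          (pow_le_pow_left₀ (abs_nonneg _) (abs_qNum_add_le hq0 hq1 x (by positivity)) n)
          (by positivity) (by positivity)
    _ = C ^ n * ∏ l, q ^ m l := by rw [rpow_natCast, prod_pow_eq_pow_sum, mul_comm]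

theorem sum_antidiagonalTuple_multisumTerm {q : ℝ} (hq0 : 0 < q) (x : ℝ) (h : ℤ) (n r M : ℕ) :
    ∑ m ∈ Nat.antidiagonalTuple r M, multisumTerm q x h n r m = singleSumTerm q x h n r M := by
  have hterm : ∀ m ∈ Nat.antidiagonalTuple r M, multisumTerm q x h n r m =
      q ^ (∑ l : Fin r, (l.rev : ℕ) * m l) *
        (q ^ (((h : ℝ) - r) * M) * (-1 : ℝ) ^ M * qNum q (M + x) ^ n) := by
    intro m hm
    rw [Nat.mem_antidiagonalTuple] at hm
    have hexp : ∑ l : Fin r, ((h : ℝ) - (l.1 + 1)) * (m l : ℝ) =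
        ((∑ l : Fin r, (l.rev : ℕ) * m l : ℕ) : ℝ) + ((h : ℝ) - r) * M := by
      rw [← hm]
      push_cast [Fin.val_rev, Nat.cast_sub (Nat.succ_le_of_lt (Fin.is_lt _))]
      rw [mul_sum, ← sum_add_distrib]
      exact sum_congr rfl fun l _ => by ring
    rw [multisumTerm, hexp, rpow_add hq0, rpow_natCast, hm, add_comm x]
    ring
  rw [sum_congr rfl hterm, ← sum_mul, sum_antidiagonalTuple_pow_rev_weight, singleSumTerm]
  ring

theorem multisum_eq_single_sum_general (q x : ℝ) (hq0 : 0 < q) (hq1 : q < 1)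
    (r : ℕ) (h : ℤ) (hh : (r : ℤ) < h) (n : ℕ) :
    Summable (fun m : Fin r → ℕ =>
        q ^ (∑ l : Fin r, ((h : ℝ) - (l.1 + 1)) * (m l : ℝ)) *
          (-1 : ℝ) ^ (∑ l : Fin r, m l) * qNum q (x + (∑ l : Fin r, m l : ℕ)) ^ n) ∧
    Summable (fun m : ℕ =>
        gaussBinom q (m + r - 1) m * q ^ (((h : ℝ) - r) * m) * (-1 : ℝ) ^ m *
          qNum q (m + x) ^ n) ∧
    (2 : ℝ) ^ r * ∑' m : Fin r → ℕ,
        q ^ (∑ l : Fin r, ((h : ℝ) - (l.1 + 1)) * (m l : ℝ)) *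
          (-1 : ℝ) ^ (∑ l : Fin r, m l) * qNum q (x + (∑ l : Fin r, m l : ℕ)) ^ n
      = (2 : ℝ) ^ r * ∑' m : ℕ,
          gaussBinom q (m + r - 1) m * q ^ (((h : ℝ) - r) * m) * (-1 : ℝ) ^ m *
            qNum q (m + x) ^ n := by
  have hmulti := summable_multisumTerm hq0 hq1 hh x n
  have hsingle : HasSum (singleSumTerm q x h n r) (∑' m, multisumTerm q x h n r m) := by
    simpa only [sum_antidiagonalTuple_multisumTerm hq0] using hmulti.hasSum.sum_antidiagonalTuple
  exact ⟨hmulti, hsingle.summable, congrArg _ hsingle.tsum_eq.symm⟩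

theorem multisum_eq_single_sum (q x : ℝ) (hq0 : 0 < q) (hq1 : q < 1)
    (r : ℕ) (hr : 1 ≤ r) (h : ℤ) (hh : (r : ℤ) < h) (n : ℕ) :
    Summable (fun m : Fin r → ℕ =>
        q ^ (∑ l : Fin r, ((h : ℝ) - (l.1 + 1)) * (m l : ℝ)) *
          (-1 : ℝ) ^ (∑ l : Fin r, m l) * qNum q (x + (∑ l : Fin r, m l : ℕ)) ^ n) ∧
    Summable (fun m : ℕ =>
        gaussBinom q (m + r - 1) m * q ^ (((h : ℝ) - r) * m) * (-1 : ℝ) ^ m *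
          qNum q (m + x) ^ n) ∧
    (2 : ℝ) ^ r * ∑' m : Fin r → ℕ,
        q ^ (∑ l : Fin r, ((h : ℝ) - (l.1 + 1)) * (m l : ℝ)) *
          (-1 : ℝ) ^ (∑ l : Fin r, m l) * qNum q (x + (∑ l : Fin r, m l : ℕ)) ^ n
      = (2 : ℝ) ^ r * ∑' m : ℕ,
          gaussBinom q (m + r - 1) m * q ^ (((h : ℝ) - r) * m) * (-1 : ℝ) ^ m *
            qNum q (m + x) ^ n :=
  multisum_eq_single_sum_general q x hq0 hq1 r h hh n
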